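/- arXiv:cs/0607032 — 7 statements merged into one kernel-verified Lean document; each statement's English description precedes it below -/
import Mathlib

section
/- For every integer n ≥ 1, the expected number of rounds M(n) of the Itai–Rodeh leader election algorithm is bounded above by B(n), i.e. M(n) ≤ B(n). -/
/-!
With `p = 1/n`, `q = 1 - 1/n`, `D n = 1 - q^n - p^n` and `r n = q^(n-1)` (the probability of exactly
one candidate), moving the repeated rounds to the left turns the recursion for `M` into
`D n * M n = 1 + ∑_{k=2}^{n-1} b(n,k) * M k`, where the weights `b(n,k)` sum to `D n - r n` by the
binomial theorem. The recursion for `B` reads `D n * B n = 1 + (D n - r n) * B (n-1)`, i.e. every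
`M k` is replaced by `B (n-1)`, so strong induction gives `M ≤ B` as soon as `B` is nondecreasing.
That amounts to the invariant `B (n-1) * r n ≤ 1`, which propagates because `r n ≤ D n` gives
`B n * r n ≤ 1`, and `r n` decreases in `n` (towards `1/e`; Bernoulli's inequality).
-/
open Finset

theorem add_pow_eq_sum_Icc_two_pred {R : Type*} [CommSemiring R] (p q : R) {n : ℕ} (hn : 2 ≤ n) :
    (p + q) ^ n = q ^ n + n * p * q ^ (n - 1) +
      ∑ k ∈ Icc 2 (n - 1), (n.choose k : R) * p ^ k * q ^ (n - k) + p ^ n := by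
  obtain ⟨m, rfl⟩ : ∃ m, n = m + 2 := ⟨n - 2, by omega⟩
  rw [add_pow, sum_range_succ, sum_range_succ', sum_range_succ',
    show Icc 2 (m + 2 - 1) = Ico 2 (m + 2) by ext; simp; omega, sum_Ico_eq_sum_range]
  simp only [Nat.choose_self, Nat.choose_zero_right, Nat.choose_one_right, Nat.sub_self,
    Nat.sub_zero, Nat.add_sub_cancel, zero_add, add_comm 2, Nat.add_sub_add_right]
  push_cast
  ring_nf

theorem one_sub_inv_succ_pow_le (n : ℕ) (hn : 1 ≤ n) :
    (1 - 1 / ((n : ℝ) + 1)) ^ n ≤ (1 - 1 / (n : ℝ)) ^ (n - 1) := by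
  obtain ⟨m, rfl⟩ : ∃ m, n = m + 1 := ⟨n - 1, by omega⟩
  rw [Nat.add_sub_cancel]
  push_cast
  set x : ℝ := (m : ℝ) + 1 with hx
  have hx1 : 1 ≤ x := by simp [hx]
  have hm : (m : ℝ) = x - 1 := by rw [hx]; ring
  clear_value x
  have bernoulli : 1 + m * (-(1 / x ^ 2)) ≤ (1 + -(1 / x ^ 2)) ^ m := by
    refine one_add_mul_le_pow ?_ m
    have : 1 / x ^ 2 ≤ 1 := by rw [div_le_one (by positivity)]; nlinarith
    linarith
  have key : 1 ≤ (1 - 1 / x) ^ m * (1 + 1 / x) ^ (m + 1) := calc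
    (1 : ℝ) ≤ (1 + m * (-(1 / x ^ 2))) * (1 + 1 / x) := by
        have : (1 + m * (-(1 / x ^ 2))) * (1 + 1 / x) = 1 + 1 / x ^ 3 := by
          rw [hm]; field_simp; ring
        rw [this]; simp only [le_add_iff_nonneg_right]; positivity
    _ ≤ (1 + -(1 / x ^ 2)) ^ m * (1 + 1 / x) := by gcongr
    _ = (1 - 1 / x) ^ m * (1 + 1 / x) ^ (m + 1) := by
        rw [pow_succ (1 + 1 / x), ← mul_assoc, ← mul_pow]; congr 2; ring
  rw [show 1 - 1 / (x + 1) = (1 + 1 / x)⁻¹ by field_simp; ring, inv_pow,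
    inv_le_iff_one_le_mul₀ (by positivity)]
  linarith

theorem add_one_sub_mul_div_mul_le_one {b r D : ℝ} (hb : b * r ≤ 1) (hr : 0 < r) (hrD : r ≤ D) :
    (b + (1 - b * r) / D) * r ≤ 1 := by
  have : (1 - b * r) / D * r ≤ 1 - b * r := by
    rw [div_mul_eq_mul_div, div_le_iff₀ (hr.trans_le hrD)]
    exact mul_le_mul_of_nonneg_left hrD (by linarith)
  linarith [add_mul b ((1 - b * r) / D) r]

section Recursion

variable {r D B : ℕ → ℝ}

theorem mul_succ_le_one_of_recursion (hr : ∀ n ≥ 2, 0 < r n) (hrD : ∀ n ≥ 2, r n ≤ D n)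
    (hanti : ∀ n ≥ 2, r (n + 1) ≤ r n) (hB1 : B 1 = 0)
    (hB : ∀ n ≥ 2, B n = B (n - 1) + (1 - B (n - 1) * r n) / D n) :
    ∀ n ≥ 1, B n * r (n + 1) ≤ 1 := by
  intro n hn
  induction n, hn using Nat.le_induction with
  | base => simp [hB1]
  | succ n hn ih =>
    have hstep : B (n + 1) * r (n + 1) ≤ 1 := by
      rw [hB (n + 1) (by omega), Nat.add_sub_cancel]
      exact add_one_sub_mul_div_mul_le_one ih (hr _ (by omega)) (hrD _ (by omega))
    have := hr (n + 2) (by omega)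
    have := hanti (n + 1) (by omega)
    rcases le_or_gt 0 (B (n + 1)) with h | h <;> nlinarith

theorem monotoneOn_of_recursion (hr : ∀ n ≥ 2, 0 < r n) (hrD : ∀ n ≥ 2, r n ≤ D n)
    (hanti : ∀ n ≥ 2, r (n + 1) ≤ r n) (hB1 : B 1 = 0)
    (hB : ∀ n ≥ 2, B n = B (n - 1) + (1 - B (n - 1) * r n) / D n) :
    MonotoneOn B (Set.Ici 1) := by
  refine monotoneOn_nat_Ici_of_le_succ fun n hn => ?_
  rw [hB (n + 1) (by omega), Nat.add_sub_cancel, le_add_iff_nonneg_right]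
  exact div_nonneg (by linarith [mul_succ_le_one_of_recursion hr hrD hanti hB1 hB n hn])
    ((hr _ (by omega)).le.trans (hrD _ (by omega)))

theorem le_of_recursion {M : ℕ → ℝ} {w : ℕ → ℕ → ℝ}
    (hr : ∀ n ≥ 2, 0 < r n) (hanti : ∀ n ≥ 2, r (n + 1) ≤ r n)
    (hw : ∀ n ≥ 2, ∀ k ∈ Icc 2 (n - 1), 0 ≤ w n k)
    (hw_sum : ∀ n ≥ 2, ∑ k ∈ Icc 2 (n - 1), w n k = D n - r n)
    (hM1 : M 1 = 0) (hM : ∀ n ≥ 2, D n * M n = 1 + ∑ k ∈ Icc 2 (n - 1), w n k * M k)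
    (hB1 : B 1 = 0)
    (hB : ∀ n ≥ 2, B n = B (n - 1) + (1 - B (n - 1) * r n) / D n) :
    ∀ n ≥ 1, M n ≤ B n := by
  have hrD : ∀ n ≥ 2, r n ≤ D n := fun n hn => by
    linarith [hw_sum n hn, sum_nonneg (hw n hn)]
  have hmono := monotoneOn_of_recursion hr hrD hanti hB1 hB
  intro n
  induction n using Nat.strong_induction_on with
  | _ n ih =>
  intro hn
  rcases hn.eq_or_lt with rfl | hn2
  · simp [hM1, hB1]
  have hD : 0 < D n := (hr n hn2).trans_le (hrD n hn2)
  have hsum : ∑ k ∈ Icc 2 (n - 1), w n k * M k ≤ (D n - r n) * B (n - 1) := by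
    rw [← hw_sum n hn2, sum_mul]
    refine sum_le_sum fun k hk => mul_le_mul_of_nonneg_left ?_ (hw n hn2 k hk)
    rw [mem_Icc] at hk
    exact (ih k (by omega) (by omega)).trans
      (hmono (Set.mem_Ici.2 (by omega)) (Set.mem_Ici.2 (by omega)) hk.2)
  rw [hB n hn2, ← mul_le_mul_iff_of_pos_left hD, hM n hn2, mul_add, mul_div_cancel₀ _ hD.ne']
  linarith

end Recursion

/-- For every integer n ≥ 1, M(n) ≤ B(n). -/
theorem itai_rodeh_mean_bounded_by_B
    (M B : ℕ → ℝ)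
    (hM1 : M 1 = 0)
    (hM : ∀ n : ℕ, 2 ≤ n →
      M n = 1 + (1 - 1/(n:ℝ))^n * M n +
        ∑ k ∈ Finset.Icc 2 n,
          (n.choose k : ℝ) * (1/(n:ℝ))^k * (1 - 1/(n:ℝ))^(n-k) * M k)
    (hB1 : B 1 = 0)
    (hB : ∀ n : ℕ, 2 ≤ n →
      B n = B (n-1) + (1 - B (n-1) * (1 - 1/(n:ℝ))^(n-1)) /
        (1 - (1 - 1/(n:ℝ))^n - (1/(n:ℝ))^n)) :
    ∀ n : ℕ, 1 ≤ n → M n ≤ B n := by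
  have hq : ∀ n : ℕ, 2 ≤ n → 0 < 1 - 1 / (n : ℝ) := fun n hn => by
    rw [sub_pos, div_lt_one (by positivity)]
    exact Nat.one_lt_cast.2 hn
  refine le_of_recursion (r := fun n => (1 - 1 / (n : ℝ)) ^ (n - 1))
    (D := fun n => 1 - (1 - 1 / (n : ℝ)) ^ n - (1 / (n : ℝ)) ^ n)
    (w := fun n k => (n.choose k : ℝ) * (1 / (n : ℝ)) ^ k * (1 - 1 / (n : ℝ)) ^ (n - k))
    (fun n hn => pow_pos (hq n hn) _) (fun n hn => ?antitone)
    (fun n hn k _ => by have := hq n hn; positivity) (fun n hn => ?weight_sum) hM1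
    (fun n hn => ?cleared) hB1 hB
  case antitone => simpa using one_sub_inv_succ_pow_le n (by omega)
  case weight_sum =>
    have h := add_pow_eq_sum_Icc_two_pred (1 / (n : ℝ)) (1 - 1 / n) hn
    rw [add_sub_cancel, one_pow, mul_one_div_cancel (by positivity)] at h
    linarith
  case cleared =>
    obtain ⟨m, rfl⟩ : ∃ m, n = m + 1 := ⟨n - 1, by omega⟩
    have h := hM (m + 1) hn
    rw [sum_Icc_succ_top (by omega), Nat.choose_self, Nat.sub_self] at h
    rw [Nat.add_sub_cancel]
    linear_combination h
end

section
/- The sequence B(n) converges to e as n → ∞ (so that, combined with M(n) ≤ B(n), the expected number of rounds M(n) is a bounded sequence). -/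
/-!
Writing `B n = c n * B (n - 1) + g n`, the coefficients converge: with `p = e⁻¹`, the quantities
`(1 - 1/n)^(n-1)` and `(1 - 1/n)^n` tend to `p` and `(1/n)^n` tends to `0`, so `c n → 1 - p/(1 - p)`,
which lies in `(-1, 1)` because `e > 2`, and `g n → 1/(1 - p)`. An affine recurrence whose coefficients
converge to such a contraction converges to the fixed point of the limiting map, here
`(1/(1 - p)) / (p/(1 - p)) = 1/p = e`.
-/

open Filter Topology Real

theorem tendsto_zero_of_le_mul_add {u r : ℕ → ℝ} {ρ : ℝ} (hρ0 : 0 ≤ ρ) (hρ1 : ρ < 1)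
    (hu : ∀ n, 0 ≤ u n) (hr : Tendsto r atTop (𝓝 0))
    (hrec : ∀ᶠ n in atTop, u (n + 1) ≤ ρ * u n + r n) :
    Tendsto u atTop (𝓝 0) := by
  refine tendsto_order.2 ⟨fun a ha => .of_forall fun n => ha.trans_le (hu n), fun a ha => ?_⟩
  set ε := a / 2
  have hr_small : ∀ᶠ n in atTop, r n ≤ (1 - ρ) * ε :=
    hr.eventually (ge_mem_nhds (by positivity))
  obtain ⟨N, hN⟩ := (hrec.and hr_small).exists_forall_of_atTop
  -- Once `r n ≤ (1 - ρ) ε`, the excess `u n - ε` contracts by the factor `ρ`.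
  have hgeom : ∀ n ≥ N, u n - ε ≤ ρ ^ (n - N) * (u N - ε) := by
    intro n hn
    induction n, hn using Nat.le_induction with
    | base => simp
    | succ n hn ih =>
      rw [Nat.sub_add_comm hn, pow_succ]
      calc u (n + 1) - ε ≤ ρ * (u n - ε) := by linarith [hN n hn]
        _ ≤ ρ * (ρ ^ (n - N) * (u N - ε)) := mul_le_mul_of_nonneg_left ih hρ0
        _ = ρ ^ (n - N) * ρ * (u N - ε) := by ring
  have hbound : Tendsto (fun n => ε + ρ ^ (n - N) * (u N - ε)) atTop (𝓝 ε) := by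
    simpa using tendsto_const_nhds.add
      (((tendsto_pow_atTop_nhds_zero_of_lt_one hρ0 hρ1).comp (tendsto_sub_atTop_nat N)).mul_const
        (u N - ε))
  filter_upwards [eventually_ge_atTop N, hbound.eventually (gt_mem_nhds (half_lt_self ha))]
    with n hn hlt
  linarith [hgeom n hn]

theorem tendsto_of_eq_mul_add_of_tendsto {x c g : ℕ → ℝ} {γ β : ℝ} (hγ : |γ| < 1)
    (hc : Tendsto c atTop (𝓝 γ)) (hg : Tendsto g atTop (𝓝 β))
    (hrec : ∀ᶠ n in atTop, x (n + 1) = c n * x n + g n) :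
    Tendsto x atTop (𝓝 (β / (1 - γ))) := by
  have hL : γ * (β / (1 - γ)) + β = β / (1 - γ) := by
    have : 1 - γ ≠ 0 := by linarith [le_abs_self γ]
    field_simp
    ring
  set L := β / (1 - γ)
  obtain ⟨ρ, hγρ, hρ1⟩ := exists_between hγ
  have hcρ : ∀ᶠ n in atTop, |c n| ≤ ρ := hc.abs.eventually (ge_mem_nhds hγρ)
  have hr : Tendsto (fun n => |c n * L + g n - L|) atTop (𝓝 0) := by
    have h := ((hc.mul_const L).add hg).sub_const L
    rw [hL, sub_self] at h
    simpa using h.abs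
  have hdist : Tendsto (fun n => |x n - L|) atTop (𝓝 0) := by
    refine tendsto_zero_of_le_mul_add ((abs_nonneg γ).trans hγρ.le) hρ1
      (fun n => abs_nonneg _) hr ?_
    filter_upwards [hrec, hcρ] with n hn hcn
    calc |x (n + 1) - L| = |c n * (x n - L) + (c n * L + g n - L)| := by rw [hn]; ring_nf
      _ ≤ |c n| * |x n - L| + |c n * L + g n - L| := by rw [← abs_mul]; exact abs_add_le _ _
      _ ≤ ρ * |x n - L| + |c n * L + g n - L| := by gcongr
  exact tendsto_sub_nhds_zero_iff.1 (tendsto_zero_iff_abs_tendsto_zero _ |>.2 hdist)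

theorem tendsto_one_sub_one_div_pow_self :
    Tendsto (fun n : ℕ => (1 - 1 / (n : ℝ)) ^ n) atTop (𝓝 (exp (-1))) := by
  simpa [sub_eq_add_neg, neg_div] using tendsto_one_add_div_pow_exp (-1)

theorem tendsto_one_sub_one_div_pow_pred :
    Tendsto (fun n : ℕ => (1 - 1 / (n : ℝ)) ^ (n - 1)) atTop (𝓝 (exp (-1))) := by
  have hbase : Tendsto (fun n : ℕ => 1 - 1 / (n : ℝ)) atTop (𝓝 1) := by
    simpa using tendsto_const_nhds.sub (tendsto_one_div_atTop_nhds_zero_nat (𝕜 := ℝ))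
  have h : Tendsto (fun n : ℕ => (1 - 1 / (n : ℝ)) ^ n / (1 - 1 / (n : ℝ))) atTop
      (𝓝 (exp (-1) / 1)) :=
    tendsto_one_sub_one_div_pow_self.div hbase one_ne_zero
  rw [div_one] at h
  refine h.congr' ?_
  filter_upwards [eventually_ge_atTop 2] with n hn
  have hne : 1 - 1 / (n : ℝ) ≠ 0 := by
    have : 1 / (n : ℝ) < 1 := by
      rw [div_lt_one (by positivity)]
      exact_mod_cast (by omega : 1 < n)
    linarith
  obtain ⟨m, rfl⟩ : ∃ m, n = m + 1 := ⟨n - 1, by omega⟩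
  rw [Nat.add_sub_cancel, pow_succ, mul_div_cancel_right₀ _ hne]

theorem tendsto_one_div_pow_self :
    Tendsto (fun n : ℕ => (1 / (n : ℝ)) ^ n) atTop (𝓝 0) := by
  refine squeeze_zero' (.of_forall fun n => by positivity) ?_ tendsto_one_div_atTop_nhds_zero_nat
  filter_upwards [eventually_ge_atTop 1] with n hn
  have : (1 : ℝ) ≤ n := by exact_mod_cast hn
  exact pow_le_of_le_one (by positivity) (div_le_one_of_le₀ this (by positivity)) (by omega)

theorem tendsto_one_sub_one_sub_one_div_pow_sub_one_div_pow :
    Tendsto (fun n : ℕ => 1 - (1 - 1 / (n : ℝ)) ^ n - (1 / (n : ℝ)) ^ n) atTop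
      (𝓝 (1 - exp (-1))) := by
  simpa only [sub_zero] using
    (tendsto_const_nhds.sub tendsto_one_sub_one_div_pow_self).sub tendsto_one_div_pow_self

theorem B_tendsto_e_general
    (B : ℕ → ℝ)
    (hB : ∀ n : ℕ, 2 ≤ n →
      B n = B (n-1) + (1 - B (n-1) * (1 - 1/(n:ℝ))^(n-1)) /
        (1 - (1 - 1/(n:ℝ))^n - (1/(n:ℝ))^n)) :
    Tendsto B atTop (𝓝 (Real.exp 1)) := by
  set p := exp (-1)
  have hp0 : 0 < p := exp_pos _
  have hp : p < 1 / 2 := exp_neg_one_lt_half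
  set d : ℕ → ℝ := fun n => 1 - (1 - 1 / (n : ℝ)) ^ n - (1 / (n : ℝ)) ^ n
  have hd : Tendsto d atTop (𝓝 (1 - p)) := tendsto_one_sub_one_sub_one_div_pow_sub_one_div_pow
  have hrec : ∀ᶠ n in atTop, B (n + 1) =
      (1 - (1 - 1 / ((n + 1 : ℕ) : ℝ)) ^ (n + 1 - 1) / d (n + 1)) * B n + 1 / d (n + 1) := by
    filter_upwards [eventually_ge_atTop 1] with n hn
    rw [hB (n + 1) (by omega), Nat.add_sub_cancel]
    ring
  have hγ : |1 - p / (1 - p)| < 1 := by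
    have hq0 : 0 < p / (1 - p) := div_pos hp0 (by linarith)
    have hq1 : p / (1 - p) < 1 := (div_lt_one (by linarith)).2 (by linarith)
    rw [abs_sub_lt_iff]
    constructor <;> linarith
  have hlim := tendsto_of_eq_mul_add_of_tendsto hγ
    ((tendsto_const_nhds.sub (tendsto_one_sub_one_div_pow_pred.div hd (by linarith))).comp
      (tendsto_add_atTop_nat 1))
    ((tendsto_const_nhds.div hd (by linarith)).comp (tendsto_add_atTop_nat 1)) hrec
  have hfix : 1 / (1 - p) / (1 - (1 - p / (1 - p))) = exp 1 := by
    rw [sub_sub_cancel, div_div_div_cancel_right₀ (by linarith), one_div, ← exp_neg, neg_neg]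
  rwa [hfix] at hlim

/-- B(n) → e as n → ∞. -/
theorem B_tendsto_e
    (B : ℕ → ℝ)
    (hB1 : B 1 = 0)
    (hB : ∀ n : ℕ, 2 ≤ n →
      B n = B (n-1) + (1 - B (n-1) * (1 - 1/(n:ℝ))^(n-1)) /
        (1 - (1 - 1/(n:ℝ))^n - (1/(n:ℝ))^n)) :
    Tendsto B atTop (𝓝 (Real.exp 1)) :=
  B_tendsto_e_general B hB
end

section
/- The sequence M(n) converges as n → ∞, and its limit M(∞) satisfies M(∞) = (1/(1−e^{−1}))·(1 + Σ_{k≥2} (e^{−1}/k!)·M(k)), where the sum is the (convergent) infinite series over all integers k ≥ 2. (Numerically M(∞) = 2.441715879….) -/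
/-!
Solving the recursion for `M n` gives `(1 - (1 - 1/n)^n) M(n) = 1 + Σ_{k=2}^n b(n,k) M(k)`.
Strong induction yields `0 ≤ M(n) ≤ e`: the probability `b(n,1) = (1 - 1/n)^(n-1) ≥ e⁻¹`
of electing a leader outright pays for the current round. Since `b(n,k) ≤ 1/k!` and
`b(n,k) → e⁻¹/k!` (Poisson limit), dominated convergence passes the sum to the limit, while
`(1 - 1/n)^n → e⁻¹`.
-/

open Filter Topology Finset Real

noncomputable def candidateProb (n k : ℕ) : ℝ :=
  (n.choose k : ℝ) * (1 / (n : ℝ)) ^ k * (1 - 1 / (n : ℝ)) ^ (n - k)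

lemma one_sub_one_div_natCast_nonneg (n : ℕ) : 0 ≤ 1 - 1 / (n : ℝ) := by
  rcases n.eq_zero_or_pos with rfl | hn
  · simp
  · exact sub_nonneg.2 (div_le_one_of_le₀ (by exact_mod_cast hn) n.cast_nonneg)

lemma candidateProb_nonneg (n k : ℕ) : 0 ≤ candidateProb n k := by
  have := one_sub_one_div_natCast_nonneg n
  unfold candidateProb
  positivity

lemma candidateProb_eq_zero_of_lt {n k : ℕ} (h : n < k) : candidateProb n k = 0 := by
  simp [candidateProb, Nat.choose_eq_zero_of_lt h]

lemma candidateProb_zero (n : ℕ) : candidateProb n 0 = (1 - 1 / (n : ℝ)) ^ n := by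
  simp [candidateProb]

lemma candidateProb_one {n : ℕ} (hn : n ≠ 0) :
    candidateProb n 1 = (1 - 1 / (n : ℝ)) ^ (n - 1) := by
  simp [candidateProb, hn]

lemma sum_candidateProb (n : ℕ) : ∑ k ∈ range (n + 1), candidateProb n k = 1 := by
  have h := add_pow (1 / (n : ℝ)) (1 - 1 / (n : ℝ)) n
  rw [add_sub_cancel, one_pow] at h
  rw [h]
  exact sum_congr rfl fun k _ => by rw [candidateProb]; ring

lemma candidateProb_le_inv_factorial (n k : ℕ) : candidateProb n k ≤ 1 / k.factorial := by
  have h1 : (1 - 1 / (n : ℝ)) ^ (n - k) ≤ 1 :=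
    pow_le_one₀ (one_sub_one_div_natCast_nonneg n) (by simp)
  have h2 : (n : ℝ) * (1 / n) ≤ 1 := by
    rcases n.eq_zero_or_pos with rfl | hn
    · simp
    · rw [mul_one_div_cancel (by positivity)]
  calc candidateProb n k ≤ (n : ℝ) ^ k / k.factorial * (1 / n) ^ k * 1 := by
        unfold candidateProb
        have := one_sub_one_div_natCast_nonneg n
        gcongr
        exact Nat.choose_le_pow_div k n
    _ = ((n : ℝ) * (1 / n)) ^ k / k.factorial := by ring
    _ ≤ 1 / k.factorial := by
        gcongr
        exact pow_le_one₀ (by positivity) h2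

lemma exp_neg_one_le_one_sub_one_div_pow (n : ℕ) :
    exp (-1) ≤ (1 - 1 / ((n : ℝ) + 1)) ^ n := by
  have hinv : (1 - 1 / ((n : ℝ) + 1)) ^ n * (1 + (n : ℝ)⁻¹) ^ n = 1 := by
    rcases n.eq_zero_or_pos with rfl | hn
    · simp
    · rw [← mul_pow]
      have : (n : ℝ) ≠ 0 := by positivity
      field_simp
      simp [div_self this]
  rw [exp_neg, inv_le_iff_one_le_mul₀ (exp_pos 1)]
  calc 1 = (1 - 1 / ((n : ℝ) + 1)) ^ n * (1 + (n : ℝ)⁻¹) ^ n := hinv.symm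
    _ ≤ (1 - 1 / ((n : ℝ) + 1)) ^ n * exp 1 := by
        gcongr
        · exact pow_nonneg (by simpa using one_sub_one_div_natCast_nonneg (n + 1)) _
        · exact one_add_inv_pow_le_exp

lemma exp_neg_one_le_candidateProb_one {n : ℕ} (hn : n ≠ 0) :
    exp (-1) ≤ candidateProb n 1 := by
  obtain ⟨m, rfl⟩ := Nat.exists_eq_succ_of_ne_zero hn
  simpa [candidateProb_one hn] using exp_neg_one_le_one_sub_one_div_pow m

lemma tendsto_candidateProb (k : ℕ) :
    Tendsto (candidateProb · k) atTop (𝓝 (exp (-1) / k.factorial)) := by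
  have hrate : Tendsto (fun n : ℕ => (n : ℝ) * (1 / n)) atTop (𝓝 1) := by
    refine tendsto_const_nhds.congr' ?_
    filter_upwards [eventually_ne_atTop 0] with n hn
    rw [mul_one_div_cancel (by exact_mod_cast hn)]
  simpa [candidateProb, one_div_pow] using
    ProbabilityTheory.tendsto_choose_mul_pow_of_tendsto_mul_atTop k hrate

lemma sum_Icc_candidateProb_mul_eq_tsum (f : ℕ → ℝ) (n : ℕ) :
    ∑ k ∈ Icc 2 n, candidateProb n k * f k = ∑' k, candidateProb n (k + 2) * f (k + 2) := by
  rw [tsum_eq_sum (s := range (n + 1 - 2)), ← Ico_add_one_right_eq_Icc, sum_Ico_eq_sum_range]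
  · simp only [add_comm 2]
  · intro k hk
    rw [candidateProb_eq_zero_of_lt (by simp at hk; omega), zero_mul]

lemma summable_const_div_factorial_add (C : ℝ) (j : ℕ) :
    Summable fun k : ℕ => C / (k + j).factorial := by
  have h := (summable_nat_add_iff j).2 (Real.summable_pow_div_factorial 1)
  simpa [div_eq_mul_inv] using h.mul_left C

section BoundedFunction

variable {f : ℕ → ℝ} {C : ℝ}

lemma summable_exp_neg_one_div_factorial_add_mul (hf : ∀ k, |f k| ≤ C) (j : ℕ) :
    Summable fun k => exp (-1) / (k + j).factorial * f k := by
  refine (summable_const_div_factorial_add C j).of_norm_bounded fun k => ?_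
  rw [norm_mul, Real.norm_eq_abs, Real.norm_eq_abs, abs_of_nonneg (by positivity), div_mul_comm]
  have : exp (-1) ≤ 1 := exp_le_one_iff.2 (by norm_num)
  have hC : 0 ≤ C := (abs_nonneg _).trans (hf k)
  calc |f k| / (k + j).factorial * exp (-1) ≤ C / (k + j).factorial * 1 := by gcongr; exact hf k
    _ = C / (k + j).factorial := mul_one _

lemma tendsto_tsum_candidateProb_add_mul (hf : ∀ k, |f k| ≤ C) (j : ℕ) :
    Tendsto (fun n => ∑' k, candidateProb n (k + j) * f k) atTop
      (𝓝 (∑' k, exp (-1) / (k + j).factorial * f k)) := by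
  refine tendsto_tsum_of_dominated_convergence (summable_const_div_factorial_add C j)
    (fun k => (tendsto_candidateProb (k + j)).mul_const (f k)) (.of_forall fun n k => ?_)
  rw [norm_mul, Real.norm_eq_abs, Real.norm_eq_abs, abs_of_nonneg (candidateProb_nonneg _ _),
    ← one_div_mul_eq_div]
  exact mul_le_mul (candidateProb_le_inv_factorial n _) (hf k) (abs_nonneg _) (by positivity)

end BoundedFunction

def ItaiRodehRecursion (M : ℕ → ℝ) : Prop :=
  ∀ n, 2 ≤ n → M n = 1 + candidateProb n 0 * M n + ∑ k ∈ Icc 2 n, candidateProb n k * M k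

namespace ItaiRodehRecursion

variable {M : ℕ → ℝ}

lemma one_sub_mul_eq (hM : ItaiRodehRecursion M) {n : ℕ} (hn : 2 ≤ n) :
    (1 - candidateProb n 0) * M n = 1 + ∑' k, candidateProb n (k + 2) * M (k + 2) := by
  rw [← sum_Icc_candidateProb_mul_eq_tsum]
  linarith [hM n hn]

lemma mem_Icc_of_forall_Ico (hM : ItaiRodehRecursion M) {n : ℕ} (hn : 2 ≤ n)
    (ih : ∀ k ∈ Ico 2 n, M k ∈ Set.Icc 0 (exp 1)) : M n ∈ Set.Icc 0 (exp 1) := by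
  set b := candidateProb n
  set S := ∑ k ∈ Ico 2 n, b k * M k
  have htotal : b 0 + b 1 + ∑ k ∈ Ico 2 n, b k + b n = 1 := by
    rw [← sum_candidateProb n, sum_range_succ, ← sum_range_add_sum_Ico _ hn]
    simp [b, sum_range_succ]
  have hsolve : (1 - b 0 - b n) * M n = 1 + S := by
    have hrec := hM n hn
    rw [← Ico_add_one_right_eq_Icc, sum_Ico_succ_top (by omega)] at hrec
    linarith
  have hS_nonneg : 0 ≤ S :=
    sum_nonneg fun k hk => mul_nonneg (candidateProb_nonneg n k) (ih k hk).1
  have hS_le : S ≤ (∑ k ∈ Ico 2 n, b k) * exp 1 := by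
    rw [sum_mul]
    exact sum_le_sum fun k hk =>
      mul_le_mul_of_nonneg_left (ih k hk).2 (candidateProb_nonneg n k)
  have hb1 : exp (-1) ≤ b 1 := exp_neg_one_le_candidateProb_one (by omega)
  have hT : 0 ≤ ∑ k ∈ Ico 2 n, b k := sum_nonneg fun k _ => candidateProb_nonneg n k
  have hD : 0 < 1 - b 0 - b n := by linarith [exp_pos (-1)]
  constructor
  · exact le_of_mul_le_mul_left (by linarith) hD
  · refine le_of_mul_le_mul_left ?_ hD
    calc (1 - b 0 - b n) * M n = 1 + S := hsolve
      _ ≤ exp (-1) * exp 1 + (∑ k ∈ Ico 2 n, b k) * exp 1 := by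
          rw [← exp_add, neg_add_cancel, exp_zero]; linarith
      _ ≤ (1 - b 0 - b n) * exp 1 := by rw [← add_mul]; gcongr; linarith

lemma mem_Icc (hM : ItaiRodehRecursion M) : ∀ n, 2 ≤ n → M n ∈ Set.Icc 0 (exp 1) := by
  intro n
  induction n using Nat.strong_induction_on with
  | _ n ih =>
    exact fun hn => hM.mem_Icc_of_forall_Ico hn fun k hk =>
      ih k (mem_Ico.1 hk).2 (mem_Ico.1 hk).1

end ItaiRodehRecursion

theorem M_tendsto_Minfty_general
    (M : ℕ → ℝ)
    (hM : ∀ n : ℕ, 2 ≤ n →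
      M n = 1 + (1 - 1/(n:ℝ))^n * M n +
        ∑ k ∈ Finset.Icc 2 n,
          (n.choose k : ℝ) * (1/(n:ℝ))^k * (1 - 1/(n:ℝ))^(n-k) * M k) :
    ∃ L : ℝ, Tendsto M atTop (𝓝 L) ∧
      Summable (fun k : ℕ => Real.exp (-1) / (Nat.factorial (k+2)) * M (k+2)) ∧
      L = 1 / (1 - Real.exp (-1)) *
        (1 + ∑' k : ℕ, Real.exp (-1) / (Nat.factorial (k+2)) * M (k+2)) := by
  have hrec : ItaiRodehRecursion M := fun n hn => by rw [candidateProb_zero]; exact hM n hn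
  have hbound (k : ℕ) : |M (k + 2)| ≤ exp 1 := by
    obtain ⟨h0, h1⟩ := hrec.mem_Icc (k + 2) (by omega)
    exact abs_le.2 ⟨by linarith [exp_pos 1], h1⟩
  have hden : Tendsto (fun n => 1 - candidateProb n 0) atTop (𝓝 (1 - exp (-1))) := by
    simpa using tendsto_const_nhds.sub (tendsto_candidateProb 0)
  have hden_ne : 1 - exp (-1) ≠ 0 := (sub_pos.2 (exp_lt_one_iff.2 (by norm_num))).ne'
  refine ⟨_, ?_, summable_exp_neg_one_div_factorial_add_mul hbound 2,
    (one_div_mul_eq_div _ _).symm⟩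
  refine ((tendsto_const_nhds.add (tendsto_tsum_candidateProb_add_mul hbound 2)).div hden
    hden_ne).congr' ?_
  filter_upwards [eventually_ge_atTop 2] with n hn
  have hpos : 0 < 1 - candidateProb n 0 := by
    rw [candidateProb_zero, sub_pos]
    exact pow_lt_one₀ (one_sub_one_div_natCast_nonneg n) (by simp; positivity) (by omega)
  rw [Pi.div_apply, div_eq_iff hpos.ne', mul_comm, hrec.one_sub_mul_eq hn]

/-- M(n) converges, and its limit M(∞) equals
    (1/(1−e⁻¹))·(1 + Σ_{k≥2} (e⁻¹/k!)·M(k)). -/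
theorem M_tendsto_Minfty
    (M : ℕ → ℝ)
    (hM1 : M 1 = 0)
    (hM : ∀ n : ℕ, 2 ≤ n →
      M n = 1 + (1 - 1/(n:ℝ))^n * M n +
        ∑ k ∈ Finset.Icc 2 n,
          (n.choose k : ℝ) * (1/(n:ℝ))^k * (1 - 1/(n:ℝ))^(n-k) * M k) :
    ∃ L : ℝ, Tendsto M atTop (𝓝 L) ∧
      Summable (fun k : ℕ => Real.exp (-1) / (Nat.factorial (k+2)) * M (k+2)) ∧
      L = 1 / (1 - Real.exp (-1)) *
        (1 + ∑' k : ℕ, Real.exp (-1) / (Nat.factorial (k+2)) * M (k+2)) :=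
  M_tendsto_Minfty_general M hM
end

section
/- For every fixed integer k ≥ 0, the sequence n·(b(n,k) − e^{−1}/k!) converges as n → ∞ to −e^{−1}·(k² − 3k + 1)/(2·k!); that is, b(n,k) = (e^{−1}/k!)·(1 − (k²−3k+1)/(2n) + O(1/n²)). -/
/-!
Writing `b(n,k) = (∏_{i<k} (1 - i/n)) (1 - 1/n)^(n-k) / k!` gives `b(n,k) = e⁻¹/k! · exp hₙ` with
`hₙ = 1 + ∑_{i<k} log (1 - i/n) + (n - k) log (1 - 1/n)`. Expanding `n log (1 - i/n) = -i + O(1/n)`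
and `n log (1 - 1/n) = -1 - 1/(2n) + O(1/n²)` yields `n hₙ → -(k² - 3k + 1)/2`; in particular
`hₙ → 0`, so `n (exp hₙ - 1) = n hₙ + O(n hₙ²)` has the same limit.
-/

open Filter Topology Finset Real
open scoped Nat

theorem tendsto_mul_exp_sub_one_of_tendsto {α : Type*} {l : Filter α} {c a : α → ℝ} {L : ℝ}
    (hca : Tendsto (fun x => c x * a x) l (𝓝 L)) (ha : Tendsto a l (𝓝 0)) :
    Tendsto (fun x => c x * (exp (a x) - 1)) l (𝓝 L) := by
  have hrem : Tendsto (fun x => c x * (exp (a x) - 1 - a x)) l (𝓝 0) := by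
    have hbound : Tendsto (fun x => ‖c x * a x * a x‖) l (𝓝 0) := by
      simpa using (hca.mul ha).norm
    refine squeeze_zero_norm' ?_ hbound
    filter_upwards [ha.eventually (Metric.closedBall_mem_nhds 0 one_pos)] with x hx
    rw [dist_zero_right, norm_eq_abs] at hx
    rw [norm_mul, norm_mul, norm_mul, norm_eq_abs, norm_eq_abs, norm_eq_abs, mul_assoc, ← sq,
      sq_abs]
    gcongr
    exact abs_exp_sub_one_sub_id_le hx
  simpa [mul_sub] using hca.add hrem

theorem tendsto_zero_of_tendsto_nat_mul {a : ℕ → ℝ} {L : ℝ}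
    (h : Tendsto (fun n : ℕ => (n : ℝ) * a n) atTop (𝓝 L)) : Tendsto a atTop (𝓝 0) := by
  have := tendsto_one_div_atTop_nhds_zero_nat.mul h
  rw [zero_mul] at this
  refine this.congr' ?_
  filter_upwards [eventually_ne_atTop 0] with n hn
  field_simp

theorem tendsto_nat_mul_log_one_sub_div (t : ℝ) :
    Tendsto (fun n : ℕ => (n : ℝ) * log (1 - t / n)) atTop (𝓝 (-t)) := by
  simpa [Function.comp_def, neg_div, ← sub_eq_add_neg] using
    (tendsto_mul_log_one_add_div_atTop (-t)).comp tendsto_natCast_atTop_atTop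

theorem tendsto_nat_mul_nat_mul_log_one_sub_div_add (t : ℝ) :
    Tendsto (fun n : ℕ => (n : ℝ) * ((n : ℝ) * log (1 - t / n) + t)) atTop
      (𝓝 (-(t ^ 2 / 2))) := by
  set R : ℕ → ℝ := fun n => (∑ i ∈ range 2, (t / n) ^ (i + 1) / (i + 1)) + log (1 - t / n)
  have hbound : ∀ᶠ n : ℕ in atTop, ‖(n : ℝ) ^ 2 * R n‖ ≤ |t| ^ 3 / (n - |t|) := by
    filter_upwards [(tendsto_natCast_atTop_atTop (R := ℝ)).eventually_gt_atTop |t|] with n hn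
    have hn0 : (0 : ℝ) < n := (abs_nonneg t).trans_lt hn
    have habs : |t / n| = |t| / n := by rw [abs_div, Nat.abs_cast]
    have hx : |t / n| < 1 := by rwa [habs, div_lt_one hn0]
    rw [norm_mul, norm_pow, Real.norm_natCast, norm_eq_abs]
    calc (n : ℝ) ^ 2 * |R n| ≤ n ^ 2 * (|t / n| ^ 3 / (1 - |t / n|)) := by
          gcongr; exact abs_log_sub_add_sum_range_le hx 2
      _ = |t| ^ 3 / (n - |t|) := by
          rw [habs]; field_simp [(sub_pos.2 hn).ne']
  have hR : Tendsto (fun n : ℕ => (n : ℝ) ^ 2 * R n) atTop (𝓝 0) :=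
    squeeze_zero_norm' hbound <| tendsto_const_nhds.div_atTop <|
      tendsto_atTop_add_const_right _ _ tendsto_natCast_atTop_atTop
  refine (hR.sub_const (t ^ 2 / 2)).congr' ?_ |>.trans (by rw [zero_sub])
  filter_upwards [eventually_ne_atTop 0] with n hn
  have hn' : (n : ℝ) ≠ 0 := Nat.cast_ne_zero.2 hn
  simp only [R, sum_range_succ, sum_range_zero]
  norm_num
  field_simp
  ring

theorem Nat.cast_choose_mul_inv_pow {K : Type*} [Field K] [CharZero K] {n : ℕ} (hn : n ≠ 0)
    (k : ℕ) : (n.choose k : K) * (n : K)⁻¹ ^ k = (∏ i ∈ range k, (1 - i / n : K)) / k ! := by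
  have hfactor : ∀ i ∈ range k, (1 - i / n : K) = (n - i) * (n : K)⁻¹ := fun i _ => by
    field_simp [Nat.cast_ne_zero.2 hn]
  rw [prod_congr rfl hfactor, prod_mul_distrib, prod_const, card_range,
    Nat.cast_choose_eq_descPochhammer_div, descPochhammer_eval_eq_prod_range, div_mul_eq_mul_div]

/-- `log (e · k! · b(n,k))`, valid for `k < n` and `2 ≤ n`. -/
noncomputable def binomialLogRatio (k n : ℕ) : ℝ :=
  1 + ∑ i ∈ range k, log (1 - i / n) + (n - k) * log (1 - 1 / n)

theorem binomial_eq_exp_binomialLogRatio {k n : ℕ} (hkn : k < n) (hn : 2 ≤ n) :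
    (n.choose k : ℝ) * (1 / n) ^ k * (1 - 1 / n) ^ (n - k) =
      exp (-1) / k ! * exp (binomialLogRatio k n) := by
  have hn0 : (0 : ℝ) < n := by positivity
  have hpos : ∀ i ∈ range k, (0 : ℝ) < 1 - i / n := fun i hi => by
    rw [sub_pos, div_lt_one hn0]
    exact_mod_cast (mem_range.1 hi).trans hkn
  have hpos₁ : (0 : ℝ) < 1 - 1 / n := by
    rw [sub_pos, div_lt_one hn0]
    exact_mod_cast hn
  rw [binomialLogRatio, exp_add, exp_add, exp_sum, ← Nat.cast_sub hkn.le, exp_nat_mul,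
    exp_log hpos₁, prod_congr rfl fun i hi => exp_log (hpos i hi), one_div,
    Nat.cast_choose_mul_inv_pow (by omega), exp_neg]
  field_simp

theorem tendsto_nat_mul_binomialLogRatio (k : ℕ) :
    Tendsto (fun n : ℕ => (n : ℝ) * binomialLogRatio k n) atTop
      (𝓝 (-((k : ℝ) ^ 2 - 3 * k + 1) / 2)) := by
  have hgauss : ∑ i ∈ range k, (i : ℝ) = k * (k - 1) / 2 := by
    induction k with
    | zero => simp
    | succ k ih => rw [sum_range_succ, ih]; push_cast; ring
  have hsum : Tendsto (fun n : ℕ => ∑ i ∈ range k, (n : ℝ) * log (1 - i / n)) atTop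
      (𝓝 (∑ i ∈ range k, -(i : ℝ))) :=
    tendsto_finsetSum _ fun i _ => tendsto_nat_mul_log_one_sub_div i
  convert hsum.add ((tendsto_nat_mul_nat_mul_log_one_sub_div_add 1).sub
    ((tendsto_nat_mul_log_one_sub_div 1).const_mul (k : ℝ))) using 2 with n
  · rw [binomialLogRatio, mul_add, mul_add, mul_sum]
    ring
  · rw [sum_neg_distrib, hgauss]
    ring

/-- for fixed k, n·(b(n,k) − e⁻¹/k!) → −e⁻¹·(k²−3k+1)/(2·k!). -/
theorem b_second_order_asymptotics (k : ℕ) :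
    Tendsto (fun n : ℕ =>
        (n:ℝ) * ((n.choose k : ℝ) * (1/(n:ℝ))^k * (1 - 1/(n:ℝ))^(n-k) -
          Real.exp (-1) / (Nat.factorial k)))
      atTop
      (𝓝 (-(Real.exp (-1)) * ((k:ℝ)^2 - 3*(k:ℝ) + 1) / (2 * (Nat.factorial k)))) := by
  have hlog := tendsto_nat_mul_binomialLogRatio k
  have hlim := (tendsto_mul_exp_sub_one_of_tendsto hlog
    (tendsto_zero_of_tendsto_nat_mul hlog)).const_mul (exp (-1) / k !)
  rw [show -exp (-1) * ((k : ℝ) ^ 2 - 3 * k + 1) / (2 * k !) =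
    exp (-1) / k ! * (-((k : ℝ) ^ 2 - 3 * k + 1) / 2) by ring]
  refine hlim.congr' ?_
  filter_upwards [eventually_gt_atTop k, eventually_ge_atTop 2] with n hkn hn
  rw [binomial_eq_exp_binomialLogRatio hkn hn]
  ring
end

section
/- There exists a constant C > 0 such that for every integer n ≥ 2 and every integer r with 2 ≤ r ≤ √n, one has Σ_{k=2}^{r} |b(n,k) − e^{−1}/k!| ≤ C·r²/n. In particular, for each fixed r the left-hand side tends to 0 as n → ∞. -/
/-!
Write `b(n,k) = P · Q / k!` with `P = n(n-1)⋯(n-k+1) / n^k` and `Q = (1 - 1/n)^(n-k)`.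
Bernoulli's inequality gives `1 - k²/n ≤ P ≤ 1`, and `e⁻¹` is squeezed between `(1 - 1/n)^n` and
`(1 - 1/n)^(n-1)`, so `0 ≤ Q - e⁻¹ ≤ k/n`. Hence each term is at most `(k² + k)/(n·k!) ≤ 2k/n`, and
summing `r - 1` of them gives `2r²/n`.
-/

theorem pow_sub_pow_add_le_mul_one_sub {R : Type*} [CommRing R] [LinearOrder R]
    [IsStrictOrderedRing R] {x : R} (hx₀ : 0 ≤ x) (hx₁ : x ≤ 1) (a k : ℕ) :
    x ^ a - x ^ (a + k) ≤ k * (1 - x) := by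
  have hbernoulli : 1 + k * (x - 1) ≤ x ^ k := one_add_mul_sub_le_pow (by linarith) k
  calc x ^ a - x ^ (a + k) = x ^ a * (1 - x ^ k) := by ring
    _ ≤ 1 - x ^ k := mul_le_of_le_one_left (sub_nonneg.mpr (pow_le_one₀ hx₀ hx₁))
        (pow_le_one₀ hx₀ hx₁)
    _ ≤ k * (1 - x) := by linarith

namespace Real

theorem exp_neg_one_le_one_sub_inv_pow_pred (n : ℕ) : exp (-1) ≤ (1 - 1 / (n : ℝ)) ^ (n - 1) := by
  obtain _ | _ | m := n
  · simp
  · simp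
  have hbase : 1 - 1 / ((m + 1 + 1 : ℕ) : ℝ) = (1 + ((m + 1 : ℕ) : ℝ)⁻¹)⁻¹ := by
    push_cast; field_simp; ring
  rw [hbase, Nat.add_sub_cancel, inv_pow, exp_neg]
  exact inv_anti₀ (by positivity) one_add_inv_pow_le_exp

theorem abs_one_sub_inv_pow_sub_exp_neg_one_le {n k : ℕ} (hk : 1 ≤ k) (hkn : k ≤ n) :
    |(1 - 1 / (n : ℝ)) ^ (n - k) - exp (-1)| ≤ k / n := by
  have hn : (1 : ℝ) ≤ n := by exact_mod_cast hk.trans hkn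
  set x : ℝ := 1 - 1 / n
  have hx₀ : 0 ≤ x := sub_nonneg.mpr ((div_le_one (by positivity)).mpr hn)
  have hx₁ : x ≤ 1 := sub_le_self _ (by positivity)
  have hlower : exp (-1) ≤ x ^ (n - k) :=
    (exp_neg_one_le_one_sub_inv_pow_pred n).trans (pow_le_pow_of_le_one hx₀ hx₁ (by omega))
  have hupper : x ^ n ≤ exp (-1) := one_sub_div_pow_le_exp_neg hn
  have hdiff := pow_sub_pow_add_le_mul_one_sub hx₀ hx₁ (n - k) k
  rw [Nat.sub_add_cancel hkn, show 1 - x = 1 / n by ring] at hdiff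
  rw [abs_of_nonneg (sub_nonneg.mpr hlower)]
  calc x ^ (n - k) - exp (-1) ≤ k * (1 / n) := by linarith
    _ = k / n := mul_one_div _ _

end Real

namespace Nat

theorem cast_choose_mul_one_div_pow (n k : ℕ) :
    (n.choose k : ℝ) * (1 / (n : ℝ)) ^ k = n.descFactorial k / (n : ℝ) ^ k / k ! := by
  rw [descFactorial_eq_factorial_mul_choose, one_div_pow]
  push_cast
  field_simp

theorem one_sub_sq_div_le_descFactorial_div_pow {n k : ℕ} (hkn : k ≤ n) :
    1 - (k : ℝ) ^ 2 / n ≤ n.descFactorial k / (n : ℝ) ^ k := by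
  obtain rfl | hn := n.eq_zero_or_pos
  · simp [Nat.le_zero.mp hkn]
  have hkn' : (k : ℝ) ≤ n := by exact_mod_cast hkn
  have hk_div : (k : ℝ) / n ≤ 1 := div_le_one_of_le₀ hkn' (by positivity)
  have hbase : (n : ℝ) - k ≤ ((n + 1 - k : ℕ) : ℝ) := by
    rw [Nat.cast_sub (by omega)]; push_cast; linarith
  calc 1 - (k : ℝ) ^ 2 / n = 1 + k * ((1 - k / n) - 1) := by ring
    _ ≤ (1 - k / n) ^ k := one_add_mul_sub_le_pow (by linarith) k
    _ = ((n : ℝ) - k) ^ k / (n : ℝ) ^ k := by rw [← div_pow, sub_div, div_self (by positivity)]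
    _ ≤ ((n + 1 - k : ℕ) : ℝ) ^ k / (n : ℝ) ^ k := by gcongr
    _ ≤ n.descFactorial k / (n : ℝ) ^ k := by
        gcongr
        exact_mod_cast pow_sub_le_descFactorial n k

end Nat

open Nat Real in
theorem abs_binomial_sub_poisson_le {n k : ℕ} (hk : 1 ≤ k) (hkn : k ≤ n) :
    |(n.choose k : ℝ) * (1 / (n : ℝ)) ^ k * (1 - 1 / (n : ℝ)) ^ (n - k) - exp (-1) / k !| ≤
      ((k : ℝ) ^ 2 + k) / n / k ! := by
  set P : ℝ := n.descFactorial k / (n : ℝ) ^ k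
  set Q : ℝ := (1 - 1 / (n : ℝ)) ^ (n - k)
  have hP₁ : P ≤ 1 := div_le_one_of_le₀ (by exact_mod_cast descFactorial_le_pow n k) (by positivity)
  have hP₀ : 1 - (k : ℝ) ^ 2 / n ≤ P := one_sub_sq_div_le_descFactorial_div_pow hkn
  have hx₀ : 0 ≤ 1 - 1 / (n : ℝ) :=
    sub_nonneg.mpr (div_le_one_of_le₀ (by exact_mod_cast hk.trans hkn) (by positivity))
  have hQ₀ : 0 ≤ Q := pow_nonneg hx₀ _
  have hQ₁ : Q ≤ 1 := pow_le_one₀ hx₀ (sub_le_self _ (by positivity))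
  have hPQ : |P * Q - Q| ≤ (k : ℝ) ^ 2 / n := by
    rw [abs_sub_comm, abs_of_nonneg (sub_nonneg.mpr (mul_le_of_le_one_left hQ₀ hP₁))]
    calc Q - P * Q = (1 - P) * Q := by ring
      _ ≤ 1 - P := mul_le_of_le_one_right (by linarith) hQ₁
      _ ≤ (k : ℝ) ^ 2 / n := by linarith
  rw [cast_choose_mul_one_div_pow, div_mul_eq_mul_div, ← sub_div, abs_div,
    abs_of_pos (by positivity : (0 : ℝ) < k !)]
  gcongr
  calc |P * Q - exp (-1)| ≤ |P * Q - Q| + |Q - exp (-1)| := abs_sub_le _ _ _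
    _ ≤ (k : ℝ) ^ 2 / n + k / n := add_le_add hPQ (abs_one_sub_inv_pow_sub_exp_neg_one_le hk hkn)
    _ = ((k : ℝ) ^ 2 + k) / n := by ring

open Nat Real in
theorem abs_binomial_sub_poisson_le_two_mul_div {n k : ℕ} (hk : 1 ≤ k) (hkn : k ≤ n) :
    |(n.choose k : ℝ) * (1 / (n : ℝ)) ^ k * (1 - 1 / (n : ℝ)) ^ (n - k) - exp (-1) / k !| ≤
      2 * k / n := by
  refine (abs_binomial_sub_poisson_le hk hkn).trans ?_
  have hk_fact : (k : ℝ) ≤ k ! := by exact_mod_cast self_le_factorial k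
  have hk₁ : (1 : ℝ) ≤ k := by exact_mod_cast hk
  rw [div_right_comm]
  gcongr
  rw [div_le_iff₀ (by positivity)]
  nlinarith

/-- uniform bound Σ_{k=2}^{r} |b(n,k) − e⁻¹/k!| ≤ C·r²/n for 2 ≤ r ≤ √n. -/
theorem sum_b_minus_poisson_bound :
    ∃ C : ℝ, 0 < C ∧ ∀ n : ℕ, 2 ≤ n → ∀ r : ℕ, 2 ≤ r → (r:ℝ) ≤ Real.sqrt n →
      ∑ k ∈ Finset.Icc 2 r,
        |(n.choose k : ℝ) * (1/(n:ℝ))^k * (1 - 1/(n:ℝ))^(n-k) -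
          Real.exp (-1) / (Nat.factorial k)| ≤ C * (r:ℝ)^2 / n := by
  refine ⟨2, two_pos, fun n _ r _ hrn => ?_⟩
  have hr_sq : r ^ 2 ≤ n := by exact_mod_cast (Real.le_sqrt (by positivity) (by positivity)).mp hrn
  have hr_le : r ≤ n := (Nat.le_self_pow two_ne_zero r).trans hr_sq
  calc _ ≤ (Finset.Icc 2 r).card • (2 * (r : ℝ) / n) := by
        refine Finset.sum_le_card_nsmul _ _ _ fun k hk => ?_
        obtain ⟨hk₂, hkr⟩ := Finset.mem_Icc.mp hk
        refine (abs_binomial_sub_poisson_le_two_mul_div (by omega) (hkr.trans hr_le)).trans ?_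
        gcongr
    _ ≤ r • (2 * (r : ℝ) / n) := by gcongr; rw [Nat.card_Icc]; omega
    _ = 2 * (r : ℝ) ^ 2 / n := by rw [nsmul_eq_mul]; ring
end

section
/- For every integer j ≥ 1 the limit Q(j) := lim_{n→∞} P(n,j) exists; moreover Q(1) = e^{−1} and, for every j ≥ 2, Q(j) = e^{−1}·Q(j−1) + Σ_{k≥2} (e^{−1}/k!)·P(k,j−1), where the sum is the (convergent) infinite series over all integers k ≥ 2. -/
open Filter Topology Finset

/-!
The weights of the recurrence are part of the binomial distribution `Bin(n, 1/n)`, so the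
recurrence preserves `|P n j| ≤ 1`. The binomial weights tend to the Poisson weights `e⁻¹ / k!`
(Poisson limit theorem) and are bounded by `(n p) ^ k / k! = 1 / k!`, so Tannery's theorem passes
`n → ∞` through the sum of the recurrence, and induction on `j` gives the limits together with
their recurrence.
-/

/-- `b(n, k)` of the paper is `binomWeight (1 / n) n k`. -/
def binomWeight (p : ℝ) (n k : ℕ) : ℝ := n.choose k * p ^ k * (1 - p) ^ (n - k)

lemma sum_range_binomWeight (p : ℝ) (n : ℕ) : ∑ k ∈ range (n + 1), binomWeight p n k = 1 := by
  calc ∑ k ∈ range (n + 1), binomWeight p n k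
      = (p + (1 - p)) ^ n := by
        rw [add_pow]; exact sum_congr rfl fun k _ ↦ by unfold binomWeight; ring
    _ = 1 := by rw [add_sub_cancel, one_pow]

section binomWeight

variable {p : ℝ} {n k : ℕ}

lemma binomWeight_nonneg (hp₀ : 0 ≤ p) (hp₁ : p ≤ 1) : 0 ≤ binomWeight p n k := by
  have : 0 ≤ 1 - p := sub_nonneg.mpr hp₁
  unfold binomWeight
  positivity

lemma binomWeight_eq_zero_of_lt (h : n < k) : binomWeight p n k = 0 := by
  simp [binomWeight, Nat.choose_eq_zero_of_lt h]

lemma sum_binomWeight_le_one {s : Finset ℕ} (hs : s ⊆ range (n + 1)) (hp₀ : 0 ≤ p) (hp₁ : p ≤ 1) :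
    ∑ k ∈ s, binomWeight p n k ≤ 1 :=
  (sum_range_binomWeight p n).le.trans' <|
    sum_le_sum_of_subset_of_nonneg hs fun _ _ _ ↦ binomWeight_nonneg hp₀ hp₁

lemma binomWeight_le (hp₀ : 0 ≤ p) (hp₁ : p ≤ 1) :
    binomWeight p n k ≤ (n * p) ^ k / k.factorial := by
  have hchoose := Nat.choose_le_pow_div (α := ℝ) k n
  have : (1 - p) ^ (n - k) ≤ 1 := pow_le_one₀ (sub_nonneg.mpr hp₁) (by linarith)
  calc binomWeight p n k ≤ n.choose k * p ^ k := by
        unfold binomWeight; exact mul_le_of_le_one_right (by positivity) this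
    _ ≤ n ^ k / k.factorial * p ^ k := by gcongr
    _ = (n * p) ^ k / k.factorial := by ring

end binomWeight

lemma sum_Icc_eq_tsum_binomWeight_mul (p : ℝ) (s n : ℕ) (f : ℕ → ℝ) :
    ∑ k ∈ Icc s n, binomWeight p n k * f k = ∑' m, binomWeight p n (m + s) * f (m + s) := by
  rw [tsum_eq_sum (s := range (n + 1 - s)) fun m hm ↦ by
    rw [binomWeight_eq_zero_of_lt (by grind), zero_mul], ← Ico_add_one_right_eq_Icc,
    sum_Ico_eq_sum_range]
  simp_rw [add_comm s]

lemma summable_div_factorial_add_mul (a : ℝ) (s : ℕ) {f : ℕ → ℝ} {C : ℝ}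
    (hf : ∀ k, s ≤ k → |f k| ≤ C) : Summable fun m ↦ a / (m + s).factorial * f (m + s) := by
  have h := (Real.summable_pow_div_factorial 1).comp_injective (add_left_injective s)
  refine .of_norm_bounded (h.mul_left (|a| * C)) fun m ↦ ?_
  simp only [Function.comp_apply, one_pow, norm_mul, norm_div, Real.norm_eq_abs, Nat.abs_cast]
  calc |a| / (m + s).factorial * |f (m + s)| ≤ |a| / (m + s).factorial * C := by
        gcongr; exact hf _ (Nat.le_add_left s m)
    _ = |a| * C * (1 / (m + s).factorial) := by ring

theorem tendsto_sum_Icc_binomWeight_mul {p : ℕ → ℝ} {r C : ℝ} (hp : ∀ n, p n ∈ Set.Icc 0 1)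
    (hr : Tendsto (fun n ↦ n * p n) atTop (𝓝 r)) (s : ℕ) {f : ℕ → ℝ}
    (hf : ∀ k, s ≤ k → |f k| ≤ C) :
    Tendsto (fun n ↦ ∑ k ∈ Icc s n, binomWeight (p n) n k * f k) atTop
      (𝓝 (∑' m, Real.exp (-r) * r ^ (m + s) / (m + s).factorial * f (m + s))) := by
  simp_rw [sum_Icc_eq_tsum_binomWeight_mul]
  refine tendsto_tsum_of_dominated_convergence
    (bound := fun m ↦ (r + 1) ^ (m + s) / (m + s).factorial * C) ?_
    (fun m ↦ (ProbabilityTheory.tendsto_choose_mul_pow_of_tendsto_mul_atTop (m + s) hr).mul_const _)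
    ?_
  · exact ((Real.summable_pow_div_factorial (r + 1)).comp_injective
      (add_left_injective s)).mul_right C
  · filter_upwards [hr.eventually (gt_mem_nhds (lt_add_one r))] with n hn m
    have hnp : 0 ≤ n * p n := mul_nonneg n.cast_nonneg (hp n).1
    rw [norm_mul, Real.norm_of_nonneg (binomWeight_nonneg (hp n).1 (hp n).2), Real.norm_eq_abs]
    have hfm := hf _ (Nat.le_add_left s m)
    have hC : 0 ≤ C := (abs_nonneg _).trans hfm
    calc binomWeight (p n) n (m + s) * |f (m + s)|
        ≤ (n * p n) ^ (m + s) / (m + s).factorial * C := by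
          gcongr
          exact binomWeight_le (hp n).1 (hp n).2
      _ ≤ (r + 1) ^ (m + s) / (m + s).factorial * C := by gcongr

lemma tendsto_natCast_mul_one_div : Tendsto (fun n : ℕ ↦ n * (1 / (n : ℝ))) atTop (𝓝 1) :=
  tendsto_const_nhds.congr' <| by
    filter_upwards [eventually_ge_atTop 1] with n hn
    field_simp

lemma tendsto_binomWeight_one_div (k : ℕ) :
    Tendsto (fun n : ℕ ↦ binomWeight (1 / n) n k) atTop (𝓝 (Real.exp (-1) / k.factorial)) := by
  simpa [binomWeight] using
    ProbabilityTheory.tendsto_choose_mul_pow_of_tendsto_mul_atTop k tendsto_natCast_mul_one_div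

lemma one_div_natCast_mem_Icc (n : ℕ) : 1 / (n : ℝ) ∈ Set.Icc 0 1 :=
  ⟨by positivity, one_div (n : ℝ) ▸ Nat.cast_inv_le_one n⟩

lemma abs_sum_mul_le_sum {ι : Type*} {s : Finset ι} {w x : ι → ℝ} (hw : ∀ i ∈ s, 0 ≤ w i)
    (hx : ∀ i ∈ s, |x i| ≤ 1) : |∑ i ∈ s, w i * x i| ≤ ∑ i ∈ s, w i :=
  (abs_sum_le_sum_abs _ _).trans <| sum_le_sum fun i hi ↦ by
    rw [abs_mul, abs_of_nonneg (hw i hi)]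
    exact mul_le_of_le_one_right (hw i hi) (hx i hi)

/-- The recurrence of `P`, shifted to `j + 1` so that no truncated `j - 1` occurs. -/
def RoundRecurrence (P : ℕ → ℕ → ℝ) : Prop :=
  ∀ n, 2 ≤ n → ∀ j, 1 ≤ j →
    P n (j + 1) = (1 - 1 / (n : ℝ)) ^ n * P n j + ∑ k ∈ Icc 2 n, binomWeight (1 / n) n k * P k j

section RoundRecurrence

variable {P : ℕ → ℕ → ℝ}

lemma abs_le_one_of_roundRecurrence (hP₁ : ∀ n, 2 ≤ n → P n 1 = (1 - 1 / (n : ℝ)) ^ (n - 1))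
    (hP : RoundRecurrence P) {j : ℕ} (hj : 1 ≤ j) : ∀ n, 2 ≤ n → |P n j| ≤ 1 := by
  induction j, hj using Nat.le_induction with
  | base =>
    intro n hn
    obtain ⟨h₀, h₁⟩ := one_div_natCast_mem_Icc n
    have : 0 ≤ 1 - 1 / (n : ℝ) := sub_nonneg.mpr h₁
    rw [hP₁ n hn, abs_of_nonneg (by positivity)]
    exact pow_le_one₀ this (by linarith)
  | succ j hj ih =>
    intro n hn
    obtain ⟨h₀, h₁⟩ := one_div_natCast_mem_Icc n
    have hw : ∀ k, 0 ≤ binomWeight (1 / n) n k := fun k ↦ binomWeight_nonneg h₀ h₁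
    calc |P n (j + 1)|
        ≤ |binomWeight (1 / n) n 0 * P n j| +
            |∑ k ∈ Icc 2 n, binomWeight (1 / n) n k * P k j| := by
          have hw₀ : (1 - 1 / (n : ℝ)) ^ n = binomWeight (1 / n) n 0 := by simp [binomWeight]
          rw [hP n hn j hj, hw₀]
          exact abs_add_le _ _
      _ ≤ binomWeight (1 / n) n 0 + ∑ k ∈ Icc 2 n, binomWeight (1 / n) n k := by
          gcongr
          · rw [abs_mul, abs_of_nonneg (hw 0)]
            exact mul_le_of_le_one_right (hw 0) (ih n hn)
          · exact abs_sum_mul_le_sum (fun k _ ↦ hw k) fun k hk ↦ ih k (mem_Icc.mp hk).1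
      _ = ∑ k ∈ insert 0 (Icc 2 n), binomWeight (1 / n) n k := by
          rw [sum_insert (by simp)]
      _ ≤ 1 := sum_binomWeight_le_one
          (fun k ↦ by simp only [mem_insert, mem_Icc, mem_range]; omega) h₀ h₁

lemma tendsto_one_of_roundRecurrence (hP₁ : ∀ n, 2 ≤ n → P n 1 = (1 - 1 / (n : ℝ)) ^ (n - 1)) :
    Tendsto (fun n ↦ P n 1) atTop (𝓝 (Real.exp (-1))) := by
  have h := tendsto_binomWeight_one_div 1
  rw [Nat.factorial_one, Nat.cast_one, div_one] at h
  refine h.congr' ?_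
  filter_upwards [eventually_ge_atTop 2] with n hn
  have : (n : ℝ) ≠ 0 := by positivity
  simp [binomWeight, hP₁ n hn, this]

lemma tendsto_succ_of_roundRecurrence (hP : RoundRecurrence P) {j : ℕ} (hj : 1 ≤ j)
    (hbound : ∀ n, 2 ≤ n → |P n j| ≤ 1) {L : ℝ} (hL : Tendsto (fun n ↦ P n j) atTop (𝓝 L)) :
    Tendsto (fun n ↦ P n (j + 1)) atTop
      (𝓝 (Real.exp (-1) * L + ∑' m, Real.exp (-1) / (m + 2).factorial * P (m + 2) j)) := by
  have hfirst : Tendsto (fun n : ℕ ↦ (1 - 1 / (n : ℝ)) ^ n) atTop (𝓝 (Real.exp (-1))) := by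
    simpa [binomWeight] using tendsto_binomWeight_one_div 0
  have hsum := tendsto_sum_Icc_binomWeight_mul one_div_natCast_mem_Icc
    tendsto_natCast_mul_one_div 2 hbound
  simp only [one_pow, mul_one] at hsum
  refine ((hfirst.mul hL).add hsum).congr' ?_
  filter_upwards [eventually_ge_atTop 2] with n hn
  exact (hP n hn j hj).symm

end RoundRecurrence

/-- for each j ≥ 1 the limit Q(j) = lim_{n→∞} P(n,j) exists, with
    Q(1) = e⁻¹ and Q(j) = e⁻¹·Q(j−1) + Σ_{k≥2} (e⁻¹/k!)·P(k,j−1) for j ≥ 2. -/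
theorem P_limit_recurrence
    (P : ℕ → ℕ → ℝ)
    (hP1 : ∀ n : ℕ, 2 ≤ n → P n 1 = (1 - 1/(n:ℝ))^(n-1))
    (hP : ∀ n : ℕ, 2 ≤ n → ∀ j : ℕ, 2 ≤ j →
      P n j = (1 - 1/(n:ℝ))^n * P n (j-1) +
        ∑ k ∈ Finset.Icc 2 n,
          (n.choose k : ℝ) * (1/(n:ℝ))^k * (1 - 1/(n:ℝ))^(n-k) * P k (j-1)) :
    ∃ Q : ℕ → ℝ,
      (∀ j : ℕ, 1 ≤ j → Tendsto (fun n : ℕ => P n j) atTop (𝓝 (Q j))) ∧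
      Q 1 = Real.exp (-1) ∧
      (∀ j : ℕ, 2 ≤ j →
        Summable (fun k : ℕ => Real.exp (-1) / (Nat.factorial (k+2)) * P (k+2) (j-1)) ∧
        Q j = Real.exp (-1) * Q (j-1) +
          ∑' k : ℕ, Real.exp (-1) / (Nat.factorial (k+2)) * P (k+2) (j-1)) := by
  have hrec : RoundRecurrence P := fun n hn j _ ↦ hP n hn (j + 1) (by omega)
  have hbound := fun j (hj : 1 ≤ j) ↦ abs_le_one_of_roundRecurrence hP1 hrec hj
  have htend : ∀ j, 1 ≤ j → Tendsto (fun n ↦ P n j) atTop (𝓝 (limUnder atTop fun n ↦ P n j)) := by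
    intro j hj
    induction j, hj using Nat.le_induction with
    | base => exact tendsto_nhds_limUnder ⟨_, tendsto_one_of_roundRecurrence hP1⟩
    | succ j hj ih =>
      exact tendsto_nhds_limUnder ⟨_, tendsto_succ_of_roundRecurrence hrec hj (hbound j hj) ih⟩
  refine ⟨fun j ↦ limUnder atTop fun n ↦ P n j, htend,
    tendsto_nhds_unique (htend 1 le_rfl) (tendsto_one_of_roundRecurrence hP1), fun j hj ↦ ?_⟩
  obtain ⟨j, rfl⟩ : ∃ i, j = i + 1 := ⟨j - 1, by omega⟩
  have hj : 1 ≤ j := by omega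
  exact ⟨summable_div_factorial_add_mul _ 2 (hbound j hj),
    tendsto_nhds_unique (htend _ (by omega))
      (tendsto_succ_of_roundRecurrence hrec hj (hbound j hj) (htend j hj))⟩
end

section
/- For every integer k ≥ 2, the limit R(k) := lim_{j→∞} 2^j·P(k,j) exists; moreover R(2) = 1 and, for every k ≥ 3, R(k) = 2·(1−1/k)^k·R(k) + 2·Σ_{ℓ=2}^{k} b(k,ℓ)·R(ℓ) (which determines R(k) recursively since 1 − 2·(1−1/k)^k − 2·(1/k)^k ≠ 0 for k ≥ 3). -/
open Filter Topology Finset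

/-!
With `Q(k, j) = 2^j P(k, j)` the recurrence reads
`Q(k, j+1) = 2(1-1/k)^k Q(k, j) + 2 ∑_{l=2}^{k} b(k, l) Q(l, j)`, so `Q(2, j) = 1` for `j ≥ 1`.
For `k ≥ 3` the terms in `Q(k, j)` combine into the factor
`r_k = 2((1-1/k)^k + k^{-k}) ≤ 2(e⁻¹ + 1/9) < 1`, and by strong induction on `k` the remaining
sum converges; a sequence with `x(j+1) = r x(j) + y(j)`, `|r| < 1`, `y → Y` converges to `Y/(1-r)`.
The recurrence for `R` is the limit of the recurrence for `Q`.
-/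

lemma le_arithGeom_of_le_mul_add {ρ b : ℝ} {a : ℕ → ℝ} (hρ : 0 ≤ ρ)
    (h : ∀ i, a (i + 1) ≤ ρ * a i + b) (i : ℕ) : a i ≤ arithGeom ρ b (a 0) i := by
  induction i with
  | zero => rfl
  | succ i ih =>
    rw [arithGeom_succ]
    exact (h i).trans (by gcongr)

lemma tendsto_zero_of_le_mul_add_s13 {ρ : ℝ} {a δ : ℕ → ℝ} (hρ0 : 0 ≤ ρ) (hρ1 : ρ < 1)
    (ha : ∀ m, 0 ≤ a m) (hδ : Tendsto δ atTop (𝓝 0))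
    (h : ∀ m, a (m + 1) ≤ ρ * a m + δ m) : Tendsto a atTop (𝓝 0) := by
  refine tendsto_order.2 ⟨fun ε hε ↦ .of_forall fun m ↦ hε.trans_le (ha m), fun ε hε ↦ ?_⟩
  set b := (1 - ρ) * (ε / 2)
  obtain ⟨N, hN⟩ := eventually_atTop.1 ((tendsto_order.1 hδ).2 b (by positivity))
  have hbound (i : ℕ) : a (i + N) ≤ arithGeom ρ b (a N) i := by
    simpa using le_arithGeom_of_le_mul_add (a := fun i ↦ a (i + N)) hρ0 (fun i ↦ by
      rw [Nat.add_right_comm]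
      exact (h _).trans (by gcongr; exact (hN _ (by omega)).le)) i
  have hlim : Tendsto (arithGeom ρ b (a N)) atTop (𝓝 (ε / 2)) := by
    have hb : b / (1 - ρ) = ε / 2 := by
      simp only [b]; field_simp [(sub_pos.2 hρ1).ne']
    exact hb ▸ tendsto_arithGeom_nhds_of_lt_one hρ0 hρ1
  rw [← map_add_atTop_eq_nat N, eventually_map]
  filter_upwards [(tendsto_order.1 hlim).2 ε (by linarith)] with i hi
  exact (hbound i).trans_lt hi

lemma tendsto_of_affine_recurrence {𝕜 E : Type*} [NormedField 𝕜] [NormedAddCommGroup E]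
    [NormedSpace 𝕜 E] {r : 𝕜} (hr : ‖r‖ < 1) {x y : ℕ → E} {Y : E}
    (hy : Tendsto y atTop (𝓝 Y)) (hrec : ∀ m, x (m + 1) = r • x m + y m) :
    Tendsto x atTop (𝓝 ((1 - r)⁻¹ • Y)) := by
  set L := (1 - r)⁻¹ • Y
  have hr1 : (1 : 𝕜) - r ≠ 0 := sub_ne_zero.2 fun h ↦ by simp [← h] at hr
  have hfix : L = r • L + Y := by
    have : (1 - r) • L = Y := by rw [smul_smul, mul_inv_cancel₀ hr1, one_smul]
    rw [sub_smul, one_smul, sub_eq_iff_eq_add] at this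
    exact this.trans (add_comm _ _)
  rw [tendsto_iff_norm_sub_tendsto_zero] at hy ⊢
  refine tendsto_zero_of_le_mul_add_s13 (norm_nonneg r) hr (fun _ ↦ norm_nonneg _) hy fun m ↦ ?_
  calc ‖x (m + 1) - L‖ = ‖r • (x m - L) + (y m - Y)‖ := by
        rw [hrec, smul_sub]; conv_lhs => rw [hfix]
        congr 1; abel
    _ ≤ ‖r‖ * ‖x m - L‖ + ‖y m - Y‖ := by
        rw [← norm_smul]; exact norm_add_le _ _

lemma two_mul_one_sub_inv_pow_add_inv_pow_lt_one {k : ℕ} (hk : 3 ≤ k) :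
    2 * ((1 - 1 / (k : ℝ)) ^ k + (1 / (k : ℝ)) ^ k) < 1 := by
  have hk' : (3 : ℝ) ≤ k := by exact_mod_cast hk
  have hstay : (1 - 1 / (k : ℝ)) ^ k ≤ Real.exp (-1) :=
    Real.one_sub_div_pow_le_exp_neg (by linarith)
  have hexp : Real.exp (-1) < 7 / 18 := by
    rw [Real.exp_neg, inv_lt_comm₀ (Real.exp_pos 1) (by norm_num)]
    linarith [Real.exp_one_gt_d9]
  have hall : (1 / (k : ℝ)) ^ k ≤ 1 / 9 := by
    calc (1 / (k : ℝ)) ^ k ≤ (1 / (k : ℝ)) ^ 2 :=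
          pow_le_pow_of_le_one (by positivity) (div_le_one_of_le₀ (by linarith) (by linarith))
            (by omega)
      _ ≤ (1 / 3) ^ 2 := by gcongr
      _ = 1 / 9 := by norm_num
  linarith

noncomputable def binomProb (n l : ℕ) : ℝ :=
  n.choose l * (1 / (n : ℝ)) ^ l * (1 - 1 / (n : ℝ)) ^ (n - l)

lemma binomProb_self (n : ℕ) : binomProb n n = (1 / (n : ℝ)) ^ n := by
  simp [binomProb]

def scaledRounds (P : ℕ → ℕ → ℝ) (k j : ℕ) : ℝ := 2 ^ j * P k j

section Rounds

variable {P : ℕ → ℕ → ℝ}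
  (hP : ∀ n : ℕ, 2 ≤ n → ∀ j : ℕ, 2 ≤ j →
    P n j = (1 - 1 / (n : ℝ)) ^ n * P n (j - 1) + ∑ k ∈ Icc 2 n, binomProb n k * P k (j - 1))
include hP

lemma scaledRounds_succ {n j : ℕ} (hn : 2 ≤ n) (hj : 1 ≤ j) :
    scaledRounds P n (j + 1) = 2 * (1 - 1 / (n : ℝ)) ^ n * scaledRounds P n j +
      2 * ∑ l ∈ Icc 2 n, binomProb n l * scaledRounds P l j := by
  simp only [scaledRounds, hP n hn (j + 1) (by omega), Nat.add_sub_cancel, pow_succ]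
  rw [mul_add, mul_sum, mul_sum]
  congr 1
  · ring
  · exact sum_congr rfl fun _ _ ↦ by ring

lemma scaledRounds_two (hP1 : P 2 1 = 1 / 2) {j : ℕ} (hj : 1 ≤ j) : scaledRounds P 2 j = 1 := by
  induction j, hj using Nat.le_induction with
  | base => simp [scaledRounds, hP1]
  | succ j hj ih =>
    rw [scaledRounds_succ hP le_rfl hj, Icc_self, sum_singleton, binomProb_self, ih]
    norm_num

lemma tendsto_scaledRounds_two (hP1 : P 2 1 = 1 / 2) : Tendsto (scaledRounds P 2) atTop (𝓝 1) :=
  tendsto_const_nhds.congr' <| eventually_atTop.2 ⟨1, fun _ hj ↦ (scaledRounds_two hP hP1 hj).symm⟩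

lemma scaledRounds_succ_of_three_le {k j : ℕ} (hk : 3 ≤ k) (hj : 1 ≤ j) :
    scaledRounds P k (j + 1) =
      2 * ((1 - 1 / (k : ℝ)) ^ k + (1 / (k : ℝ)) ^ k) * scaledRounds P k j +
        2 * ∑ l ∈ Icc 2 (k - 1), binomProb k l * scaledRounds P l j := by
  obtain ⟨m, rfl⟩ : ∃ m, k = m + 1 := ⟨k - 1, by omega⟩
  rw [scaledRounds_succ hP (by omega) hj, sum_Icc_succ_top (by omega), binomProb_self,
    Nat.add_sub_cancel]
  ring

lemma tendsto_scaledRounds (hP1 : P 2 1 = 1 / 2) {k : ℕ} (hk : 2 ≤ k) :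
    Tendsto (scaledRounds P k) atTop (𝓝 (limUnder atTop (scaledRounds P k))) := by
  induction k using Nat.strong_induction_on with
  | _ k ih =>
  refine tendsto_nhds_limUnder ?_
  obtain rfl | hk : k = 2 ∨ 3 ≤ k := by omega
  · exact ⟨1, tendsto_scaledRounds_two hP hP1⟩
  have hstay : 0 ≤ 1 - 1 / (k : ℝ) :=
    sub_nonneg.2 (div_le_one_of_le₀ (by norm_cast; omega) (by positivity))
  have hrate : ‖2 * ((1 - 1 / (k : ℝ)) ^ k + (1 / (k : ℝ)) ^ k)‖ < 1 := by
    rw [Real.norm_eq_abs, abs_lt]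
    exact ⟨by linarith [pow_nonneg hstay k, (by positivity : 0 ≤ (1 / (k : ℝ)) ^ k)],
      two_mul_one_sub_inv_pow_add_inv_pow_lt_one hk⟩
  have hsum :
      Tendsto (fun j ↦ 2 * ∑ l ∈ Icc 2 (k - 1), binomProb k l * scaledRounds P l (j + 1)) atTop
        (𝓝 (2 * ∑ l ∈ Icc 2 (k - 1), binomProb k l * limUnder atTop (scaledRounds P l))) := by
    refine (tendsto_finsetSum _ fun l hl ↦ ?_).const_mul 2
    rw [mem_Icc] at hl
    exact ((ih l (by omega) hl.1).comp (tendsto_add_atTop_nat 1)).const_mul _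
  exact ⟨_, (tendsto_add_atTop_iff_nat 1).1 <|
    tendsto_of_affine_recurrence hrate hsum
      fun j ↦ scaledRounds_succ_of_three_le hP (j := j + 1) hk (by omega)⟩

end Rounds

/-- for every k ≥ 2 the limit R(k) = lim_{j→∞} 2^j·P(k,j) exists, with
    R(2) = 1 and the stated recurrence for k ≥ 3. -/
theorem R_exists_and_recurrence
    (P : ℕ → ℕ → ℝ)
    (hP1 : ∀ n : ℕ, 2 ≤ n → P n 1 = (1 - 1/(n:ℝ))^(n-1))
    (hP : ∀ n : ℕ, 2 ≤ n → ∀ j : ℕ, 2 ≤ j →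
      P n j = (1 - 1/(n:ℝ))^n * P n (j-1) +
        ∑ k ∈ Finset.Icc 2 n,
          (n.choose k : ℝ) * (1/(n:ℝ))^k * (1 - 1/(n:ℝ))^(n-k) * P k (j-1)) :
    ∃ R : ℕ → ℝ,
      (∀ k : ℕ, 2 ≤ k →
        Tendsto (fun j : ℕ => (2:ℝ)^j * P k j) atTop (𝓝 (R k))) ∧
      R 2 = 1 ∧
      (∀ k : ℕ, 3 ≤ k →
        R k = 2 * (1 - 1/(k:ℝ))^k * R k +
          2 * ∑ l ∈ Finset.Icc 2 k,
            (k.choose l : ℝ) * (1/(k:ℝ))^l * (1 - 1/(k:ℝ))^(k-l) * R l) := by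
  have hP2 : P 2 1 = 1 / 2 := by norm_num [hP1 2 le_rfl]
  have hlim {k : ℕ} (hk : 2 ≤ k) := tendsto_scaledRounds hP hP2 hk
  refine ⟨fun k ↦ limUnder atTop (scaledRounds P k), fun k hk ↦ hlim hk,
    tendsto_nhds_unique (hlim le_rfl) (tendsto_scaledRounds_two hP hP2), fun k hk ↦ ?_⟩
  have hrhs := ((hlim (by omega : 2 ≤ k)).const_mul (2 * (1 - 1 / (k : ℝ)) ^ k)).add
    ((tendsto_finsetSum (Icc 2 k) fun l hl ↦
      (hlim (mem_Icc.1 hl).1).const_mul (binomProb k l)).const_mul 2)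
  refine tendsto_nhds_unique ((hlim (by omega)).comp (tendsto_add_atTop_nat 1)) (hrhs.congr' ?_)
  filter_upwards [eventually_ge_atTop 1] with j hj
  exact (scaledRounds_succ hP (by omega) hj).symm
end
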